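/- arXiv:1905.11741 — 4 statements merged into one kernel-verified Lean document; each statement's English description precedes it below -/
import Mathlib

section
/- Let X, U be finite random variables with joint distribution determined by P_X and an encoder P_{U|X}. For any s ≥ 0, any conditional distribution Q_{X|U}, and any distribution Q_U, the variational bound L^VB(P,Q) := E_{P_X}[ E_{P_{U|X}}[log Q_{X|U}] − s·D_KL(P_{U|X} ∥ Q_U) ] satisfies L^VB(P,Q) ≤ −H(X|U) − s·I(X;U), where H(X|U) and I(X;U) are computed under the true joint distribution. -/
open scoped BigOperators

/-- Kullback–Leibler divergence between two pmfs on a finite set. -/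
noncomputable def klF {α : Type*} [Fintype α] (p q : α → ℝ) : ℝ :=
  ∑ a, p a * Real.log (p a / q a)

/-- Shannon mutual information of a joint pmf on a product of finite sets. -/
noncomputable def miF {α β : Type*} [Fintype α] [Fintype β] (j : α → β → ℝ) : ℝ :=
  ∑ a, ∑ b, j a b * Real.log (j a b / ((∑ b', j a b') * (∑ a', j a' b)))

/-- Conditional Shannon entropy H(α | β) of a joint pmf. -/
noncomputable def condEntF {α β : Type*} [Fintype α] [Fintype β] (j : α → β → ℝ) : ℝ :=
  - ∑ a, ∑ b, j a b * Real.log (j a b / (∑ a', j a' b))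

/-- Shannon entropy of a pmf on a finite set. -/
noncomputable def entF {α : Type*} [Fintype α] (p : α → ℝ) : ℝ :=
  - ∑ a, p a * Real.log (p a)

/-- Pointwise Gibbs inequality: `p - q ≤ p log(p/q)`. -/
lemma gibbs_pt (p q : ℝ) (hp : 0 ≤ p) (hq : 0 ≤ q) (hpq : 0 < p → 0 < q) :
    p - q ≤ p * Real.log (p / q) := by
  rcases hp.eq_or_lt with h | h
  · rw [← h]; simpa using hq
  · have hq' := hpq h
    have h1 : Real.log (q / p) ≤ q / p - 1 := Real.log_le_sub_one_of_pos (by positivity)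
    have h2 : Real.log (q / p) = - Real.log (p / q) := by
      rw [← Real.log_inv]; congr 1; rw [inv_div]
    have key : 1 - q / p ≤ Real.log (p / q) := by rw [h2] at h1; linarith
    have h3 := mul_le_mul_of_nonneg_left key hp
    have hc : p * (1 - q / p) = p - q := by field_simp
    linarith

/-- The variational bound `L^VB(P,Q)` is dominated by `-H(X|U) - s·I(X;U)`. -/
theorem stmt_2 {X U : Type*} [Fintype X] [Fintype U]
    (pX : X → ℝ) (enc : X → U → ℝ) (QXU : U → X → ℝ) (QU : U → ℝ) (s : ℝ)
    (hs : 0 ≤ s)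
    (hpX : ∀ x, 0 ≤ pX x) (hpX1 : ∑ x, pX x = 1)
    (henc : ∀ x u, 0 ≤ enc x u) (henc1 : ∀ x, ∑ u, enc x u = 1)
    (hQXU : ∀ u x, 0 ≤ QXU u x) (hQXU1 : ∀ u, ∑ x, QXU u x = 1)
    (hQXUpos : ∀ x u, 0 < pX x * enc x u → 0 < QXU u x)
    (hQU : ∀ u, 0 < QU u) (hQU1 : ∑ u, QU u = 1) :
    (∑ x, pX x * ((∑ u, enc x u * Real.log (QXU u x)) - s * klF (enc x) QU))
      ≤ - condEntF (fun x u => pX x * enc x u)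
          - s * miF (fun x u => pX x * enc x u) := by
  have hj : ∀ x u, 0 ≤ pX x * enc x u := fun x u => mul_nonneg (hpX x) (henc x u)
  have hpU0 : ∀ u, 0 ≤ ∑ x', pX x' * enc x' u :=
    fun u => Finset.sum_nonneg fun x _ => hj x u
  have hjle : ∀ x u, pX x * enc x u ≤ ∑ x', pX x' * enc x' u := fun x u =>
    Finset.single_le_sum (fun x' _ => hj x' u) (Finset.mem_univ x)
  have hsum1 : ∑ x, ∑ u, pX x * enc x u = 1 := by
    simp_rw [← Finset.mul_sum, henc1, mul_one]; exact hpX1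
  have hpUsum : ∑ u, ∑ x', pX x' * enc x' u = 1 := by
    rw [Finset.sum_comm]; exact hsum1
  -- Part 1: reconstruction term vs conditional entropy
  have hG1 : (∑ x, pX x * (∑ u, enc x u * Real.log (QXU u x)))
      ≤ - condEntF (fun x u => pX x * enc x u) := by
    have hL : (∑ x, pX x * ∑ u, enc x u * Real.log (QXU u x))
        = ∑ x, ∑ u, pX x * enc x u * Real.log (QXU u x) := by
      simp_rw [Finset.mul_sum, mul_assoc]
    have key : ∀ x u, pX x * enc x u * Real.log (QXU u x)
        + (pX x * enc x u - (∑ x', pX x' * enc x' u) * QXU u x)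
        ≤ pX x * enc x u * Real.log (pX x * enc x u / ∑ x', pX x' * enc x' u) := by
      intro x u
      rcases (hj x u).eq_or_lt with h | h
      · rw [← h]; simpa using mul_nonneg (hpU0 u) (hQXU u x)
      · have hQ := hQXUpos x u h
        have hpUu : 0 < ∑ x', pX x' * enc x' u := lt_of_lt_of_le h (hjle x u)
        have hg := gibbs_pt (pX x * enc x u) ((∑ x', pX x' * enc x' u) * QXU u x)
          (hj x u) (mul_nonneg (hpU0 u) (hQXU u x)) (fun _ => mul_pos hpUu hQ)
        have hlog : Real.log (pX x * enc x u / ((∑ x', pX x' * enc x' u) * QXU u x))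
            = Real.log (pX x * enc x u / ∑ x', pX x' * enc x' u) - Real.log (QXU u x) := by
          rw [div_mul_eq_div_div, Real.log_div (div_pos h hpUu).ne' hQ.ne']
        rw [hlog, mul_sub] at hg
        linarith
    have hle := Finset.sum_le_sum (fun x (_ : x ∈ Finset.univ) =>
      Finset.sum_le_sum (fun u (_ : u ∈ Finset.univ) => key x u))
    have hPUQ : ∑ x, ∑ u, (∑ x', pX x' * enc x' u) * QXU u x = 1 := by
      rw [Finset.sum_comm]
      simp_rw [← Finset.mul_sum, hQXU1, mul_one]
      exact hpUsum
    have hsplit : (∑ x, ∑ u, (pX x * enc x u * Real.log (QXU u x)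
          + (pX x * enc x u - (∑ x', pX x' * enc x' u) * QXU u x)))
        = (∑ x, ∑ u, pX x * enc x u * Real.log (QXU u x))
          + ((∑ x, ∑ u, pX x * enc x u) - ∑ x, ∑ u, (∑ x', pX x' * enc x' u) * QXU u x) := by
      simp_rw [Finset.sum_add_distrib, Finset.sum_sub_distrib]
    rw [hsplit, hsum1, hPUQ] at hle
    simp only [condEntF, neg_neg]
    rw [hL]
    linarith
  -- Part 2: rate term vs mutual information
  have hG2 : miF (fun x u => pX x * enc x u) ≤ ∑ x, pX x * klF (enc x) QU := by
    have hR : (∑ x, pX x * klF (enc x) QU)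
        = ∑ x, ∑ u, pX x * enc x u * Real.log (enc x u / QU u) := by
      unfold klF; simp_rw [Finset.mul_sum, mul_assoc]
    have hM : miF (fun x u => pX x * enc x u)
        = ∑ x, ∑ u, pX x * enc x u
            * Real.log (pX x * enc x u / (pX x * ∑ x', pX x' * enc x' u)) := by
      unfold miF
      simp_rw [← Finset.mul_sum, henc1, mul_one]
    have key2 : ∀ x u, pX x * enc x u
          * Real.log (pX x * enc x u / (pX x * ∑ x', pX x' * enc x' u))
        ≤ pX x * enc x u * Real.log (enc x u / QU u)
          - (pX x * enc x u - QU u * (pX x * enc x u / ∑ x', pX x' * enc x' u)) := by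
      intro x u
      rcases (hj x u).eq_or_lt with h | h
      · rw [← h]; simp
      · have hx : 0 < pX x := (hpX x).lt_of_ne fun h' => by
          rw [← h', zero_mul] at h; exact h.false
        have he : 0 < enc x u := (henc x u).lt_of_ne fun h' => by
          rw [← h', mul_zero] at h; exact h.false
        have hpUu : 0 < ∑ x', pX x' * enc x' u := lt_of_lt_of_le h (hjle x u)
        have hq := hQU u
        rw [mul_div_mul_left (enc x u) _ hx.ne']
        have hlog1 : Real.log (enc x u / ∑ x', pX x' * enc x' u)
            = Real.log (enc x u) - Real.log (∑ x', pX x' * enc x' u) :=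
          Real.log_div he.ne' hpUu.ne'
        have hlog2 : Real.log (enc x u / QU u) = Real.log (enc x u) - Real.log (QU u) :=
          Real.log_div he.ne' hq.ne'
        have hgib : Real.log (QU u / ∑ x', pX x' * enc x' u)
            ≤ QU u / (∑ x', pX x' * enc x' u) - 1 :=
          Real.log_le_sub_one_of_pos (by positivity)
        rw [Real.log_div hq.ne' hpUu.ne'] at hgib
        have hmul := mul_le_mul_of_nonneg_left hgib h.le
        rw [mul_sub, mul_sub, mul_one] at hmul
        have hring : QU u * (pX x * enc x u / ∑ x', pX x' * enc x' u)
            = pX x * enc x u * (QU u / ∑ x', pX x' * enc x' u) := by ring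
        rw [hlog1, hlog2, mul_sub, mul_sub, hring]
        linarith
    have hle2 := Finset.sum_le_sum (fun x (_ : x ∈ Finset.univ) =>
      Finset.sum_le_sum (fun u (_ : u ∈ Finset.univ) => key2 x u))
    have hB : ∑ x, ∑ u, QU u * (pX x * enc x u / ∑ x', pX x' * enc x' u) ≤ 1 := by
      rw [Finset.sum_comm]
      have hinner : ∀ u, (∑ x, QU u * (pX x * enc x u / ∑ x', pX x' * enc x' u))
          = QU u * ((∑ x, pX x * enc x u) / ∑ x', pX x' * enc x' u) := by
        intro u
        rw [← Finset.mul_sum, ← Finset.sum_div]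
      simp_rw [hinner]
      have hdiv : ∀ u, (∑ x, pX x * enc x u) / (∑ x', pX x' * enc x' u) ≤ 1 := by
        intro u
        rcases (hpU0 u).eq_or_lt with h | h
        · rw [← h]; simp
        · rw [div_self h.ne']
      calc (∑ u, QU u * ((∑ x, pX x * enc x u) / ∑ x', pX x' * enc x' u))
          ≤ ∑ u, QU u * 1 :=
            Finset.sum_le_sum fun u _ => mul_le_mul_of_nonneg_left (hdiv u) (hQU u).le
        _ = 1 := by simp [hQU1]
    have hsplit2 : (∑ x, ∑ u, (pX x * enc x u * Real.log (enc x u / QU u)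
          - (pX x * enc x u - QU u * (pX x * enc x u / ∑ x', pX x' * enc x' u))))
        = (∑ x, ∑ u, pX x * enc x u * Real.log (enc x u / QU u))
          - ((∑ x, ∑ u, pX x * enc x u)
            - ∑ x, ∑ u, QU u * (pX x * enc x u / ∑ x', pX x' * enc x' u)) := by
      simp_rw [Finset.sum_sub_distrib]
    rw [hsplit2, hsum1] at hle2
    rw [hM, hR]
    linarith
  -- Combine
  have hexp : ∀ x, pX x * ((∑ u, enc x u * Real.log (QXU u x)) - s * klF (enc x) QU)
      = pX x * (∑ u, enc x u * Real.log (QXU u x)) - s * (pX x * klF (enc x) QU) := by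
    intro x; ring
  simp only [hexp]
  rw [Finset.sum_sub_distrib, ← Finset.mul_sum]
  have := mul_le_mul_of_nonneg_left hG2 hs
  linarith
end

section
/- For finite random variables C, X, U with the Markov chain C — X — U under P, and variational distributions Q_C, Q_{U|C}, Q_U(u) = Σ_c Q_C(c)Q_{U|C}(u|c), Q_{C|U}(c|u) = Q_C(c)Q_{U|C}(u|c)/Q_U(u), the following identity holds: E_{P_X}[ D_KL(P_{C|X} ∥ Q_C) + E_{P_{C|X}}[D_KL(P_{U|X} ∥ Q_{U|C})] ] = E_{P_X}[ D_KL(P_{U|X} ∥ Q_U) + E_{P_{U|X}}[D_KL(P_{C|X} ∥ Q_{C|U})] ]. -/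
open scoped BigOperators

private lemma term_eq (p q QCc r QU : ℝ) (hp : 0 ≤ p) (hq : 0 ≤ q)
    (hQCc : 0 < QCc) (hr : 0 < r) (hQU : 0 < QU) :
    p * q * (Real.log (p / QCc) + Real.log (q / r))
      = q * p * (Real.log (q / QU) + Real.log (p / (QCc * r / QU))) := by
  rcases eq_or_lt_of_le hp with h | hp'
  · simp [← h]
  rcases eq_or_lt_of_le hq with h | hq'
  · simp [← h]
  rw [Real.log_div hp'.ne' hQCc.ne', Real.log_div hq'.ne' hr.ne',
    Real.log_div hq'.ne' hQU.ne',
    Real.log_div hp'.ne' (by positivity),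
    Real.log_div (by positivity) hQU.ne',
    Real.log_mul hQCc.ne' hr.ne']
  ring

/-- Identity between the two decompositions of the VaDE regularizer under the
    Markov chain C — X — U. -/
theorem stmt_4 {C X U : Type*} [Fintype C] [Fintype X] [Fintype U]
    (pX : X → ℝ) (pCgX : X → C → ℝ) (pUgX : X → U → ℝ)
    (QC : C → ℝ) (QUgC : C → U → ℝ)
    (hpX : ∀ x, 0 ≤ pX x) (hpX1 : ∑ x, pX x = 1)
    (hpC : ∀ x c, 0 ≤ pCgX x c) (hpC1 : ∀ x, ∑ c, pCgX x c = 1)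
    (hpU : ∀ x u, 0 ≤ pUgX x u) (hpU1 : ∀ x, ∑ u, pUgX x u = 1)
    (hQC : ∀ c, 0 < QC c) (hQC1 : ∑ c, QC c = 1)
    (hQUgC : ∀ c u, 0 < QUgC c u) (hQUgC1 : ∀ c, ∑ u, QUgC c u = 1) :
    ∑ x, pX x * (klF (pCgX x) QC + ∑ c, pCgX x c * klF (pUgX x) (QUgC c))
      = ∑ x, pX x *
          (klF (pUgX x) (fun u => ∑ c, QC c * QUgC c u)
            + ∑ u, pUgX x u *
                klF (pCgX x) (fun c => QC c * QUgC c u / (∑ c', QC c' * QUgC c' u))) := by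
  have hCne : (Finset.univ : Finset C).Nonempty := by
    rcases (Finset.univ : Finset C).eq_empty_or_nonempty with h | h
    · simp [h] at hQC1
    · exact h
  have hQU : ∀ u, 0 < ∑ c, QC c * QUgC c u := fun u =>
    Finset.sum_pos (fun c _ => mul_pos (hQC c) (hQUgC c u)) hCne
  refine Finset.sum_congr rfl fun x _ => ?_
  congr 1
  unfold klF
  -- rewrite each side as a double sum over c, u
  have hL : ∑ c, pCgX x c * Real.log (pCgX x c / QC c)
        + ∑ c, pCgX x c * ∑ u, pUgX x u * Real.log (pUgX x u / QUgC c u)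
      = ∑ c, ∑ u, pCgX x c * pUgX x u *
          (Real.log (pCgX x c / QC c) + Real.log (pUgX x u / QUgC c u)) := by
    rw [← Finset.sum_add_distrib]
    refine Finset.sum_congr rfl fun c _ => ?_
    rw [Finset.mul_sum]
    have : pCgX x c * Real.log (pCgX x c / QC c)
        = ∑ u, pUgX x u * (pCgX x c * Real.log (pCgX x c / QC c)) := by
      rw [← Finset.sum_mul, hpU1, one_mul]
    rw [this, ← Finset.sum_add_distrib]
    refine Finset.sum_congr rfl fun u _ => ?_
    ring
  have hR : ∑ u, pUgX x u * Real.log (pUgX x u / ∑ c, QC c * QUgC c u)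
        + ∑ u, pUgX x u * ∑ c, pCgX x c *
            Real.log (pCgX x c / (QC c * QUgC c u / ∑ c', QC c' * QUgC c' u))
      = ∑ u, ∑ c, pUgX x u * pCgX x c *
          (Real.log (pUgX x u / ∑ c, QC c * QUgC c u)
            + Real.log (pCgX x c / (QC c * QUgC c u / ∑ c', QC c' * QUgC c' u))) := by
    rw [← Finset.sum_add_distrib]
    refine Finset.sum_congr rfl fun u _ => ?_
    rw [Finset.mul_sum]
    have : pUgX x u * Real.log (pUgX x u / ∑ c, QC c * QUgC c u)
        = ∑ c, pCgX x c * (pUgX x u * Real.log (pUgX x u / ∑ c, QC c * QUgC c u)) := by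
      rw [← Finset.sum_mul, hpC1, one_mul]
    rw [this, ← Finset.sum_add_distrib]
    refine Finset.sum_congr rfl fun c _ => ?_
    ring
  rw [hL, hR, Finset.sum_comm]
  refine Finset.sum_congr rfl fun u _ => Finset.sum_congr rfl fun c _ => ?_
  exact term_eq _ _ _ _ _ (hpC x c) (hpU x u) (hQC c) (hQUgC c u) (hQU u)
end

section
/- With notation as above, the generalized VaDE bound L_s^VaDE := E_{P_X}[ E_{P_{U|X}}[log Q_{X|U}] − s·D_KL(P_{C|X} ∥ Q_C) − s·E_{P_{C|X}}[D_KL(P_{U|X} ∥ Q_{U|C})] ] satisfies L_s^VaDE = L_s^VB − s·E_{P_X}[ E_{P_{U|X}}[ D_KL(P_{C|X} ∥ Q_{C|U}) ] ], where L_s^VB = E_{P_X}[ E_{P_{U|X}}[log Q_{X|U}] − s·D_KL(P_{U|X} ∥ Q_U) ] and Q_U is the mixture Σ_c Q_C(c)Q_{U|C}(·|c). -/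
open scoped BigOperators

private lemma point (a b q1 q2 Q : ℝ) (ha : 0 ≤ a) (hb : 0 ≤ b)
    (h1 : 0 < q1) (h2 : 0 < q2) (hQ : 0 < Q) :
    a * Real.log (a / q1) * b + a * (b * Real.log (b / q2))
      = b * Real.log (b / Q) * a + b * (a * Real.log (a / (q1 * q2 / Q))) := by
  rcases eq_or_lt_of_le ha with h | h
  · simp [← h]
  rcases eq_or_lt_of_le hb with h' | h'
  · simp [← h']
  rw [Real.log_div h.ne' h1.ne', Real.log_div h'.ne' h2.ne',
      Real.log_div h'.ne' hQ.ne', Real.log_div h.ne' (by positivity),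
      Real.log_div (by positivity) hQ.ne', Real.log_mul h1.ne' h2.ne']
  ring

private lemma key {C U : Type*} [Fintype C] [Fintype U]
    (pC : C → ℝ) (pU : U → ℝ) (QC : C → ℝ) (QUgC : C → U → ℝ)
    (hpC : ∀ c, 0 ≤ pC c) (hpC1 : ∑ c, pC c = 1)
    (hpU : ∀ u, 0 ≤ pU u) (hpU1 : ∑ u, pU u = 1)
    (hQC : ∀ c, 0 < QC c) (hQUgC : ∀ c u, 0 < QUgC c u) :
    klF pC QC + ∑ c, pC c * klF pU (QUgC c)
      = klF pU (fun u => ∑ c, QC c * QUgC c u)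
        + ∑ u, pU u * klF pC (fun c => QC c * QUgC c u / (∑ c', QC c' * QUgC c' u)) := by
  have hQU : ∀ u, 0 < ∑ c, QC c * QUgC c u := by
    intro u
    have hne : (Finset.univ : Finset C).Nonempty := by
      by_contra h
      rw [Finset.not_nonempty_iff_eq_empty] at h
      rw [h, Finset.sum_empty] at hpC1
      norm_num at hpC1
    exact Finset.sum_pos (fun c _ => mul_pos (hQC c) (hQUgC c u)) hne
  simp only [klF]
  have L1 : ∑ c, pC c * Real.log (pC c / QC c)
      = ∑ c, ∑ u, pC c * Real.log (pC c / QC c) * pU u := by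
    refine Finset.sum_congr rfl fun c _ => ?_
    rw [← Finset.mul_sum, hpU1, mul_one]
  have R1 : ∑ u, pU u * Real.log (pU u / ∑ c, QC c * QUgC c u)
      = ∑ c, ∑ u, pU u * Real.log (pU u / ∑ c', QC c' * QUgC c' u) * pC c := by
    rw [Finset.sum_comm]
    refine Finset.sum_congr rfl fun u _ => ?_
    rw [← Finset.mul_sum, hpC1, mul_one]
  rw [L1, R1]
  simp only [Finset.mul_sum]
  rw [← Finset.sum_add_distrib]
  rw [Finset.sum_comm (f := fun u c => pU u * (pC c * Real.log (pC c / (QC c * QUgC c u / ∑ c', QC c' * QUgC c' u))))]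
  rw [← Finset.sum_add_distrib]
  refine Finset.sum_congr rfl fun c _ => ?_
  rw [← Finset.sum_add_distrib, ← Finset.sum_add_distrib]
  refine Finset.sum_congr rfl fun u _ => ?_
  exact point (pC c) (pU u) (QC c) (QUgC c u) (∑ c', QC c' * QUgC c' u)
    (hpC c) (hpU u) (hQC c) (hQUgC c u) (hQU u)

/-- The generalized VaDE bound equals the variational IB bound minus
    `s·E_{P_X}[E_{P_{U|X}}[D_KL(P_{C|X} ‖ Q_{C|U})]]`. -/
theorem stmt_5 {C X U : Type*} [Fintype C] [Fintype X] [Fintype U]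
    (pX : X → ℝ) (pCgX : X → C → ℝ) (pUgX : X → U → ℝ)
    (QC : C → ℝ) (QUgC : C → U → ℝ) (QXU : U → X → ℝ) (s : ℝ)
    (hs : 0 ≤ s)
    (hpX : ∀ x, 0 ≤ pX x) (hpX1 : ∑ x, pX x = 1)
    (hpC : ∀ x c, 0 ≤ pCgX x c) (hpC1 : ∀ x, ∑ c, pCgX x c = 1)
    (hpU : ∀ x u, 0 ≤ pUgX x u) (hpU1 : ∀ x, ∑ u, pUgX x u = 1)
    (hQC : ∀ c, 0 < QC c) (hQC1 : ∑ c, QC c = 1)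
    (hQUgC : ∀ c u, 0 < QUgC c u) (hQUgC1 : ∀ c, ∑ u, QUgC c u = 1)
    (hQXU : ∀ u x, 0 < QXU u x) (hQXU1 : ∀ u, ∑ x, QXU u x = 1) :
    ∑ x, pX x * ((∑ u, pUgX x u * Real.log (QXU u x))
        - s * klF (pCgX x) QC
        - s * ∑ c, pCgX x c * klF (pUgX x) (QUgC c))
      = (∑ x, pX x * ((∑ u, pUgX x u * Real.log (QXU u x))
            - s * klF (pUgX x) (fun u => ∑ c, QC c * QUgC c u)))
        - s * ∑ x, pX x * ∑ u, pUgX x u *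
            klF (pCgX x) (fun c => QC c * QUgC c u / (∑ c', QC c' * QUgC c' u)) := by
  have hrw : s * ∑ x, pX x * ∑ u, pUgX x u *
      klF (pCgX x) (fun c => QC c * QUgC c u / (∑ c', QC c' * QUgC c' u))
      = ∑ x, pX x * (s * ∑ u, pUgX x u *
          klF (pCgX x) (fun c => QC c * QUgC c u / (∑ c', QC c' * QUgC c' u))) := by
    rw [Finset.mul_sum]
    exact Finset.sum_congr rfl fun x _ => by ring
  rw [hrw, ← Finset.sum_sub_distrib]
  refine Finset.sum_congr rfl fun x _ => ?_
  have h := key (pCgX x) (pUgX x) QC QUgC (hpC x) (hpC1 x) (hpU x) (hpU1 x) hQC hQUgC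
  linear_combination (-(pX x * s)) * h
end

section
/- With the setup of the previous statement and s ≥ 0, the generalized VaDE bound is dominated by the variational IB bound: L_s^VaDE ≤ L_s^VB, with equality if Q_{C|U}(·|u) = P_{C|X}(·|x) for all pairs (x,u) in the support of the joint distribution of (X,U). -/
open scoped BigOperators

lemma klF_nonneg {α : Type*} [Fintype α] {p q : α → ℝ}
    (hp : ∀ a, 0 ≤ p a) (hp1 : ∑ a, p a = 1)
    (hq : ∀ a, 0 < q a) (hq1 : ∑ a, q a = 1) :
    0 ≤ klF p q := by
  have h : ∀ a ∈ Finset.univ, p a - q a ≤ p a * Real.log (p a / q a) := by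
    intro a _
    rcases eq_or_lt_of_le (hp a) with h0 | h0
    · simp [← h0, (hq a).le]
    · have hlog : Real.log (q a / p a) ≤ q a / p a - 1 :=
        Real.log_le_sub_one_of_pos (div_pos (hq a) h0)
    
      have h1 : Real.log (p a / q a) = - Real.log (q a / p a) := by
        rw [← Real.log_inv, inv_div]
      have hc : p a * (q a / p a) = q a := mul_div_cancel₀ _ (ne_of_gt h0)
      nlinarith [mul_le_mul_of_nonneg_left hlog (le_of_lt h0)]
  have := Finset.sum_le_sum h
  rw [Finset.sum_sub_distrib, hp1, hq1] at this
  simpa [klF] using this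

lemma klF_eq_zero {α : Type*} [Fintype α] {p q : α → ℝ}
    (h : ∀ a, q a = p a) : klF p q = 0 := by
  unfold klF
  apply Finset.sum_eq_zero
  intro a _
  by_cases h0 : p a = 0
  · simp [h0]
  · simp [h a, div_self h0]

lemma chain_identity {C U : Type*} [Fintype C] [Fintype U]
    (p : C → ℝ) (r : U → ℝ) (QC : C → ℝ) (QUgC : C → U → ℝ)
    (hp : ∀ c, 0 ≤ p c) (hp1 : ∑ c, p c = 1)
    (hr : ∀ u, 0 ≤ r u) (hr1 : ∑ u, r u = 1)
    (hQC : ∀ c, 0 < QC c) (hQ : ∀ c u, 0 < QUgC c u) :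
    klF p QC + ∑ c, p c * klF r (QUgC c)
      = klF r (fun u => ∑ c, QC c * QUgC c u)
        + ∑ u, r u * klF p (fun c => QC c * QUgC c u / ∑ c', QC c' * QUgC c' u) := by
  have hC : Nonempty C := by
    by_contra h
    rw [not_nonempty_iff] at h
    simp at hp1
  have hM : ∀ u, 0 < ∑ c, QC c * QUgC c u := fun u =>
    Finset.sum_pos (fun c _ => mul_pos (hQC c) (hQ c u)) Finset.univ_nonempty
  simp only [klF]
  have A : ∑ c, p c * Real.log (p c / QC c)
      = ∑ c, ∑ u, p c * r u * Real.log (p c / QC c) := by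
    refine Finset.sum_congr rfl fun c _ => ?_
    rw [← Finset.sum_mul, ← Finset.mul_sum, hr1, mul_one]
  have B : ∀ c, p c * ∑ u, r u * Real.log (r u / QUgC c u)
      = ∑ u, p c * r u * Real.log (r u / QUgC c u) := by
    intro c; rw [Finset.mul_sum]; exact Finset.sum_congr rfl fun u _ => by ring
  have Cc : ∑ u, r u * Real.log (r u / ∑ c, QC c * QUgC c u)
      = ∑ c, ∑ u, p c * r u * Real.log (r u / ∑ c', QC c' * QUgC c' u) := by
    rw [Finset.sum_comm]
    refine Finset.sum_congr rfl fun u _ => ?_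
    rw [show ∑ c, p c * r u * Real.log (r u / ∑ c', QC c' * QUgC c' u)
        = (∑ c, p c) * (r u * Real.log (r u / ∑ c', QC c' * QUgC c' u)) by
      rw [Finset.sum_mul]; exact Finset.sum_congr rfl fun c _ => by ring]
    rw [hp1, one_mul]
  have D : ∀ u, r u * ∑ c, p c * Real.log (p c / (QC c * QUgC c u / ∑ c', QC c' * QUgC c' u))
      = ∑ c, p c * r u * Real.log (p c / (QC c * QUgC c u / ∑ c', QC c' * QUgC c' u)) := by
    intro u; rw [Finset.mul_sum]; exact Finset.sum_congr rfl fun c _ => by ring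
  rw [A]
  simp only [B, D]
  rw [Cc]
  rw [show (∑ u : U, ∑ c : C, p c * r u * Real.log (p c / (QC c * QUgC c u / ∑ c', QC c' * QUgC c' u)))
      = ∑ c : C, ∑ u : U, p c * r u * Real.log (p c / (QC c * QUgC c u / ∑ c', QC c' * QUgC c' u))
    from Finset.sum_comm]
  rw [← Finset.sum_add_distrib, ← Finset.sum_add_distrib]
  refine Finset.sum_congr rfl fun c _ => ?_
  rw [← Finset.sum_add_distrib, ← Finset.sum_add_distrib]
  refine Finset.sum_congr rfl fun u _ => ?_
  rcases eq_or_lt_of_le (hp c) with h0 | h0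
  · simp [← h0]
  rcases eq_or_lt_of_le (hr u) with h1 | h1
  · simp [← h1]
  have hpc := ne_of_gt h0
  have hru := ne_of_gt h1
  have hqc := ne_of_gt (hQC c)
  have hq := ne_of_gt (hQ c u)
  have hm := ne_of_gt (hM u)
  have hfrac : QC c * QUgC c u / ∑ c', QC c' * QUgC c' u ≠ 0 := by
    positivity
  rw [Real.log_div hpc hqc, Real.log_div hru hq, Real.log_div hru hm,
    Real.log_div hpc hfrac, Real.log_div (mul_ne_zero hqc hq) hm,
    Real.log_mul hqc hq]
  ring

/-- `L_s^VaDE ≤ L_s^VB`, with equality when `Q_{C|U}(·|u) = P_{C|X}(·|x)` for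
    all `(x,u)` in the support of the joint law of `(X,U)`. -/
theorem stmt_6 {C X U : Type*} [Fintype C] [Fintype X] [Fintype U]
    (pX : X → ℝ) (pCgX : X → C → ℝ) (pUgX : X → U → ℝ)
    (QC : C → ℝ) (QUgC : C → U → ℝ) (QXU : U → X → ℝ) (s : ℝ)
    (hs : 0 ≤ s)
    (hpX : ∀ x, 0 ≤ pX x) (hpX1 : ∑ x, pX x = 1)
    (hpC : ∀ x c, 0 ≤ pCgX x c) (hpC1 : ∀ x, ∑ c, pCgX x c = 1)
    (hpU : ∀ x u, 0 ≤ pUgX x u) (hpU1 : ∀ x, ∑ u, pUgX x u = 1)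
    (hQC : ∀ c, 0 < QC c) (hQC1 : ∑ c, QC c = 1)
    (hQUgC : ∀ c u, 0 < QUgC c u) (hQUgC1 : ∀ c, ∑ u, QUgC c u = 1)
    (hQXU : ∀ u x, 0 < QXU u x) (hQXU1 : ∀ u, ∑ x, QXU u x = 1) :
    (∑ x, pX x * ((∑ u, pUgX x u * Real.log (QXU u x))
        - s * klF (pCgX x) QC
        - s * ∑ c, pCgX x c * klF (pUgX x) (QUgC c))
      ≤ ∑ x, pX x * ((∑ u, pUgX x u * Real.log (QXU u x))
          - s * klF (pUgX x) (fun u => ∑ c, QC c * QUgC c u)))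
    ∧ ((∀ x u, 0 < pX x * pUgX x u →
          ∀ c, QC c * QUgC c u / (∑ c', QC c' * QUgC c' u) = pCgX x c) →
        ∑ x, pX x * ((∑ u, pUgX x u * Real.log (QXU u x))
            - s * klF (pCgX x) QC
            - s * ∑ c, pCgX x c * klF (pUgX x) (QUgC c))
          = ∑ x, pX x * ((∑ u, pUgX x u * Real.log (QXU u x))
              - s * klF (pUgX x) (fun u => ∑ c, QC c * QUgC c u))) := by
  have hCne : Nonempty C := by
    by_contra h
    rw [not_nonempty_iff] at h
    simp at hQC1
  have hM : ∀ u, 0 < ∑ c, QC c * QUgC c u := fun u =>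
    Finset.sum_pos (fun c _ => mul_pos (hQC c) (hQUgC c u)) Finset.univ_nonempty
  have hcond1 : ∀ u, ∑ c, QC c * QUgC c u / ∑ c', QC c' * QUgC c' u = 1 := by
    intro u
    rw [← Finset.sum_div, div_self (ne_of_gt (hM u))]
  have hid : ∀ x, klF (pCgX x) QC + ∑ c, pCgX x c * klF (pUgX x) (QUgC c)
      = klF (pUgX x) (fun u => ∑ c, QC c * QUgC c u)
        + ∑ u, pUgX x u * klF (pCgX x)
            (fun c => QC c * QUgC c u / ∑ c', QC c' * QUgC c' u) := fun x =>
    chain_identity (pCgX x) (pUgX x) QC QUgC (hpC x) (hpC1 x) (hpU x) (hpU1 x) hQC hQUgC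
  have hKL : ∀ x u, 0 ≤ klF (pCgX x)
      (fun c => QC c * QUgC c u / ∑ c', QC c' * QUgC c' u) := fun x u =>
    klF_nonneg (hpC x) (hpC1 x)
      (fun c => div_pos (mul_pos (hQC c) (hQUgC c u)) (hM u)) (hcond1 u)
  have hD : ∀ x, 0 ≤ ∑ u, pUgX x u * klF (pCgX x)
      (fun c => QC c * QUgC c u / ∑ c', QC c' * QUgC c' u) := fun x =>
    Finset.sum_nonneg fun u _ => mul_nonneg (hpU x u) (hKL x u)
  constructor
  · refine Finset.sum_le_sum fun x _ => ?_
    refine mul_le_mul_of_nonneg_left ?_ (hpX x)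
    nlinarith [hid x, mul_nonneg hs (hD x)]
  · intro hc
    refine Finset.sum_congr rfl fun x _ => ?_
    rcases eq_or_lt_of_le (hpX x) with h0 | h0
    · rw [← h0]; ring
    have hDzero : ∑ u, pUgX x u * klF (pCgX x)
        (fun c => QC c * QUgC c u / ∑ c', QC c' * QUgC c' u) = 0 := by
      refine Finset.sum_eq_zero fun u _ => ?_
      rcases eq_or_lt_of_le (hpU x u) with h1 | h1
      · rw [← h1, zero_mul]
      · rw [klF_eq_zero (fun c => hc x u (mul_pos h0 h1) c), mul_zero]
    have key : klF (pCgX x) QC + ∑ c, pCgX x c * klF (pUgX x) (QUgC c)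
        = klF (pUgX x) (fun u => ∑ c, QC c * QUgC c u) := by
      rw [hid x, hDzero, add_zero]
    linear_combination (-(pX x * s)) * key
end
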